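/- If r is an ab-ba rotor, then m(UU(r)) + m(DD(r)) = 2·m(r), where the ba-frequencies of UU(r) and DD(r) are computed regarding them as ab-ba sequences with period length |r| (targets 4, 5 identified with states 1, 2). -/
import Mathlib


open scoped Classical

/-! ### Periodic sequences and rotor types

A rotor type is modelled as a function `f : ℕ → ℕ` (0-based reindexing of the paper's
sequence `r(1), r(2), …`, so the paper's `r(k)` is `f (k-1)`), together with its minimal
period `n`.  The states of the rotor are the values occurring in one period. -/

def IsPeriodicWith {α : Type*} (f : ℕ → α) (n : ℕ) : Prop := ∀ k, f (k + n) = f k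

def IsMinimalPeriod {α : Type*} (f : ℕ → α) (n : ℕ) : Prop :=
  0 < n ∧ IsPeriodicWith f n ∧ ∀ m, 0 < m → IsPeriodicWith f m → n ≤ m

noncomputable def minPeriod {α : Type*} (f : ℕ → α) : ℕ :=
  sInf {n | 0 < n ∧ IsPeriodicWith f n}

/-- `f` (with period `n`) reads the same forwards and backwards:
`r(k) = r(n+1-k)` for `1 ≤ k ≤ n`, written 0-based. -/
def Palindromic (f : ℕ → ℕ) (n : ℕ) : Prop := ∀ k < n, f k = f (n - 1 - k)

/-- `f` (with period `n`) is block-repetitive with block length `m`. -/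
def BlockRepetitive (f : ℕ → ℕ) (n m : ℕ) : Prop :=
  2 ≤ m ∧ m ∣ n ∧ ∀ k : ℕ, ∀ j < m, f (k * m + j) = f (k * m)

def Boppy (f : ℕ → ℕ) (n : ℕ) : Prop := Palindromic f n ∨ ∃ m, BlockRepetitive f n m

/-- The set of states of a rotor type of period `n`. -/
def states (f : ℕ → ℕ) (n : ℕ) : Finset ℕ := (Finset.range n).image f

/-- Number of occurrences of the state `v` among the first `n` terms of `f`. -/
noncomputable def countIn (f : ℕ → ℕ) (n v : ℕ) : ℕ :=
  ((Finset.range n).filter (fun k => f k = v)).card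

/-- Merging reduction `s → s'`: replace every occurrence of `s` by `s'`. -/
def merge (f : ℕ → ℕ) (s s' : ℕ) : ℕ → ℕ := fun k => if f k = s then s' else f k

/-- Destructive reduction `x(s)`: delete every occurrence of `s` and re-index. -/
noncomputable def destroy (f : ℕ → ℕ) (s : ℕ) : ℕ → ℕ :=
  fun k => f (Nat.nth (fun i => f i ≠ s) k)

/-- A two-state rotor type with states `1` and `2`, both occurring. -/
def TwoState (f : ℕ → ℕ) : Prop :=
  (∀ k, f k = 1 ∨ f k = 2) ∧ (∃ k, f k = 1) ∧ (∃ k, f k = 2)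

/-! ### The compressor

The particle's trajectory alternates: at step `t` (0-based) the source `v1` fires its
`(t+1)`-st term `f t`; if it is `1`, the particle moves to `v2`, whose firing count so far
is the number of `1`'s among `f 0, …, f (t-1)`; if it is `2`, it moves to `v3` similarly.
From `v2`/`v3` the particle either returns to the source (no target hit) or hits target
`4`/`5` and restarts at the source.  `X Y : Bool` encode the variation, `true` = `U`:
at `v2` state `1` routes up to `v1` iff `X = true`; at `v3` state `1` routes up iff
`Y = true`. -/

noncomputable def hitAt (X Y : Bool) (r : ℕ → ℕ) (t : ℕ) : Option ℕ :=
  if r t = 1 then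
    (if decide (r (countIn r t 1) = 1) ≠ X then some 4 else none)
  else
    (if decide (r (countIn r t 2) = 1) ≠ Y then some 5 else none)

/-- The hitting sequence of the compressor variation `XY` on rotor type `r`:
the subsequence of recorded targets (`4` or `5`), in order. -/
noncomputable def compSeq (X Y : Bool) (r : ℕ → ℕ) : ℕ → ℕ :=
  fun k => (hitAt X Y r (Nat.nth (fun t => (hitAt X Y r t).isSome = true) k)).getD 4

noncomputable def UUseq (r : ℕ → ℕ) : ℕ → ℕ := compSeq true true r
noncomputable def UDseq (r : ℕ → ℕ) : ℕ → ℕ := compSeq true false r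
noncomputable def DUseq (r : ℕ → ℕ) : ℕ → ℕ := compSeq false true r
noncomputable def DDseq (r : ℕ → ℕ) : ℕ → ℕ := compSeq false false r

/-- The compressor output with targets `4, 5` relabelled as states `1, 2`. -/
noncomputable def compOp (X Y : Bool) (r : ℕ → ℕ) : ℕ → ℕ := fun k => compSeq X Y r k - 3

noncomputable def UUop (r : ℕ → ℕ) : ℕ → ℕ := compOp true true r
noncomputable def UDop (r : ℕ → ℕ) : ℕ → ℕ := compOp true false r
noncomputable def DUop (r : ℕ → ℕ) : ℕ → ℕ := compOp false true r
noncomputable def DDop (r : ℕ → ℕ) : ℕ → ℕ := compOp false false r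

/-- A finite composition of compressor operations (each given by its pair of letters),
with the targets relabelled back to `1, 2` after each application. -/
noncomputable def applyOps (ops : List (Bool × Bool)) (r : ℕ → ℕ) : ℕ → ℕ :=
  ops.foldl (fun s o => compOp o.1 o.2 s) r

/-- The hitting sequence of the depth-2 binary tree network `BT` on `r`
(targets `1,2,3,4`): every firing of the source produces a hit. -/
noncomputable def BTseq (r : ℕ → ℕ) : ℕ → ℕ :=
  fun t => if r t = 1 then (if r (countIn r t 1) = 1 then 1 else 2)
           else (if r (countIn r t 2) = 1 then 3 else 4)

/-- Two sequences are equivalent if one is obtained from the other by a relabelling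
that is injective on the values of the first (a bijective relabelling of states). -/
def SeqEquiv {α β : Type*} (f : ℕ → α) (g : ℕ → β) : Prop :=
  ∃ ρ : α → β, (∀ k, ρ (f k) = g k) ∧ ∀ k l, ρ (f k) = ρ (f l) → f k = f l

/-- Every aligned block of length `m` of `f` contains states `1` and `2` equally often
(`m = 2n` gives `2n`-balance). -/
def BalancedBlocks (f : ℕ → ℕ) (m : ℕ) : Prop :=
  ∀ k : ℕ, countIn (fun j => f (k * m + j)) m 1 = countIn (fun j => f (k * m + j)) m 2

/-- `f ≡_m g` : some relabelling of `f` (injective on states) has the same multiset of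
entries as `g` on every aligned block of length `m`. -/
def BlockEquiv (f g : ℕ → ℕ) (m : ℕ) : Prop :=
  ∃ ρ : ℕ → ℕ, (∀ k l, ρ (f k) = ρ (f l) ↔ f k = f l) ∧
    ∀ k : ℕ, (Multiset.range m).map (fun j => ρ (f (k * m + j))) =
             (Multiset.range m).map (fun j => g (k * m + j))

/-- `L` is a balanced run decomposition of one period (of length `p`) of `f`:
a list of positive run lengths summing to `p` such that each corresponding
consecutive run contains `1` and `2` equally often. -/
noncomputable def IsBRD (f : ℕ → ℕ) (p : ℕ) (L : List ℕ) : Prop :=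
  L.sum = p ∧ (∀ a ∈ L, 0 < a) ∧
  ∀ i : Fin L.length,
    countIn (fun j => f ((L.take i.1).sum + j)) (L.get i) 1 =
    countIn (fun j => f ((L.take i.1).sum + j)) (L.get i) 2

/-- `L` is a uniform run decomposition of one period (of length `p`) of `f`:
a list of positive run lengths summing to `p` such that each corresponding
consecutive run is constant. -/
def IsURD (f : ℕ → ℕ) (p : ℕ) (L : List ℕ) : Prop :=
  L.sum = p ∧ (∀ a ∈ L, 0 < a) ∧
  ∀ i : Fin L.length, ∀ j < L.get i, f ((L.take i.1).sum + j) = f ((L.take i.1).sum)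

/-- The maximal number of runs in a BRD of `f` (period `p`). -/
noncomputable def maxBRD (f : ℕ → ℕ) (p : ℕ) : ℕ :=
  sSup {m | ∃ L : List ℕ, IsBRD f p L ∧ L.length = m}

/-- The balance coefficient `b(f)` (with respect to period length `p`). -/
noncomputable def balCoeff (f : ℕ → ℕ) (p : ℕ) : ℚ := (maxBRD f p : ℚ) / (p : ℚ)

/-- The type of a run decomposition, as an infinite periodic sequence of run data. -/
def typeSeq (L : List ℕ) : ℕ → ℕ := fun i => L.getD (i % L.length) 0

/-- A BURD rotor: it has a BRD and a URD of the same type, i.e. the `i`-th balanced run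
has length `2·b_i` where `b_i` is the length of the `i`-th uniform run. -/
noncomputable def IsBURD (f : ℕ → ℕ) (p : ℕ) : Prop :=
  ∃ L M : List ℕ, IsBRD f p L ∧ IsURD f p M ∧ ∀ i, typeSeq L i = 2 * typeSeq M i

/-- The ba-frequency `m(f) = 2k/p` of an ab-ba sequence with period length `p`,
where `k` is the number of `21` blocks per period. -/
noncomputable def baFreq (f : ℕ → ℕ) (p : ℕ) : ℚ :=
  (2 * (((Finset.range (p / 2)).filter (fun j => f (2 * j) = 2)).card : ℚ)) / (p : ℚ)

/-! ### Rotor-router networks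

A rotor-router network on a vertex type `V`: a source, a finite set of targets
(outdegree 0), and at every non-target vertex `v` the rotor pattern, recorded by the
sequence `rotor v : ℕ → V` of heads of its successive out-edges.  The underlying digraph
has an edge `v → w` (for non-target `v`) iff `w` occurs in `v`'s rotor pattern. -/

structure RotorNetwork (V : Type) where
  source : V
  target : Finset V
  rotor : V → ℕ → V

namespace RotorNetwork

variable {V : Type} [DecidableEq V]

/-- One step of the particle dynamics on states `(current position, firing counts)`:
at a target, record it and restart at the source; at a non-target vertex `v`, fire the
next term of `v`'s rotor pattern. -/
noncomputable def step (N : RotorNetwork V) (s : V × (V → ℕ)) : V × (V → ℕ) :=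
  if s.1 ∈ N.target then (N.source, s.2)
  else (N.rotor s.1 (s.2 s.1), Function.update s.2 s.1 (s.2 s.1 + 1))

/-- The full trajectory of the particle, started at the source with all rotors fresh. -/
noncomputable def traj (N : RotorNetwork V) : ℕ → V × (V → ℕ)
  | 0 => (N.source, fun _ => 0)
  | t + 1 => N.step (N.traj t)

/-- The hitting sequence: the subsequence of targets visited, in order. -/
noncomputable def hitSeq (N : RotorNetwork V) : ℕ → V :=
  fun k => (N.traj (Nat.nth (fun t => (N.traj t).1 ∈ N.target) k)).1

/-- Adjacency of the underlying digraph. -/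
def adj (N : RotorNetwork V) (v w : V) : Prop :=
  v ∉ N.target ∧ ∃ k, N.rotor v k = w

/-- A valid rotor-router network: the source is not a target, there is at least one
target, and every non-target vertex can reach some target. -/
def Valid (N : RotorNetwork V) : Prop :=
  N.source ∉ N.target ∧ N.target.Nonempty ∧
  ∀ v : V, v ∉ N.target → ∃ t ∈ N.target, Relation.ReflTransGen N.adj v t

/-- The rotor pattern at `v` has type `r`: it is `e ∘ r` for some assignment `e` of
states to out-neighbours. -/
def HasType (N : RotorNetwork V) (v : V) (r : ℕ → ℕ) : Prop :=
  ∃ e : ℕ → V, ∀ k, N.rotor v k = e (r k)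

end RotorNetwork

/-- The alternating rotor type `1, 2, 1, 2, …` of period `2`. -/
def rot12 : ℕ → ℕ := fun k => if k % 2 = 0 then 1 else 2

/-- `r` is universal: every rotor type `r'` is, up to a bijective relabelling of states,
the hitting sequence of some finite rotor-router network all of whose rotors have type `r`. -/
noncomputable def Universal (r : ℕ → ℕ) : Prop :=
  ∀ (r' : ℕ → ℕ) (n' : ℕ), IsMinimalPeriod r' n' →
    ∃ (m : ℕ) (N : RotorNetwork (Fin m)), N.Valid ∧
      (∀ v, v ∉ N.target → N.HasType v r) ∧ SeqEquiv N.hitSeq r'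

/-- The (1-based) position of the `m`-th occurrence of the state `v` in `f`
(`posOf f 1 = f`, `posOf f 2 = g` in the paper's notation; `countIn f · 1 = F`,
`countIn f · 2 = G`). -/
noncomputable def posOf (f : ℕ → ℕ) (v m : ℕ) : ℕ := Nat.nth (fun k => f k = v) (m - 1) + 1

/-! ### Auxiliary lemmas for Statement 17 -/

section Stmt17Aux

lemma countIn_eq_count (f : ℕ → ℕ) (n v : ℕ) :
    countIn f n v = Nat.count (fun k => f k = v) n := by
  rw [Nat.count_eq_card_filter_range, countIn]

lemma blocks_of (r : ℕ → ℕ) (h2 : TwoState r) (habba : BalancedBlocks r 2) (j : ℕ) :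
    (r (2*j) = 1 ∧ r (2*j+1) = 2) ∨ (r (2*j) = 2 ∧ r (2*j+1) = 1) := by
  have h := habba j
  rw [countIn_eq_count, countIn_eq_count] at h
  simp only [Nat.count_succ, Nat.count_zero] at h
  have h0 := h2.1 (2*j)
  have h1 := h2.1 (2*j+1)
  have e0 : j * 2 + 0 = 2 * j := by ring
  have e1 : j * 2 + 1 = 2 * j + 1 := by ring
  rw [e0, e1] at h
  rcases h0 with h0 | h0 <;> rcases h1 with h1 | h1 <;> simp [h0, h1] at h ⊢

lemma count_states (r : ℕ → ℕ) (h2 : TwoState r) (habba : BalancedBlocks r 2) :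
    ∀ j, Nat.count (fun k => r k = 1) (2*j) = j ∧ Nat.count (fun k => r k = 2) (2*j) = j := by
  intro j
  induction j with
  | zero => simp
  | succ n ih =>
    have e : 2*(n+1) = 2*n + 1 + 1 := by ring
    rw [e]
    simp only [Nat.count_succ]
    rcases blocks_of r h2 habba n with ⟨h0, h1⟩ | ⟨h0, h1⟩ <;>
      simp [h0, h1, ih.1, ih.2]

lemma p_even (r : ℕ → ℕ) (p : ℕ) (h2 : TwoState r) (hper : IsPeriodicWith r p)
    (hp : 0 < p) (habba : BalancedBlocks r 2) : ∃ q, p = 2 * q ∧ 0 < q := by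
  have hb := blocks_of r h2 habba
  rcases Nat.even_or_odd p with he | ho
  · obtain ⟨q, hq⟩ := he
    refine ⟨q, by omega, by omega⟩
  · exfalso
    obtain ⟨m, hm⟩ := ho
    have e1 : ∀ j, r (2*(j+m)) = 3 - r (2*j) := by
      intro j
      have h := hper (2*j)
      have e : 2*j + p = 2*(j+m) + 1 := by omega
      rw [e] at h
      rcases hb (j+m) with ⟨h0, h1⟩ | ⟨h0, h1⟩ <;> rcases hb j with ⟨g0, g1⟩ | ⟨g0, g1⟩ <;>
        omega
    have e2 : ∀ j, r (2*(j+m+1)) = 3 - r (2*j) := by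
      intro j
      have h := hper (2*j+1)
      have e : 2*j + 1 + p = 2*(j+m+1) := by omega
      rw [e] at h
      rcases hb (j+m+1) with ⟨h0, h1⟩ | ⟨h0, h1⟩ <;> rcases hb j with ⟨g0, g1⟩ | ⟨g0, g1⟩ <;>
        omega
    have e3 : ∀ j, r (2*(j+1)) = r (2*j) := by
      intro j
      have a := e1 (j+1)
      have b := e2 j
      have e : j + 1 + m = j + m + 1 := by omega
      rw [e] at a
      rcases hb (j+1) with ⟨h0, h1⟩ | ⟨h0, h1⟩ <;> rcases hb j with ⟨g0, g1⟩ | ⟨g0, g1⟩ <;>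
        omega
    have e4 : ∀ j, r (2*j) = r 0 := by
      intro j
      induction j with
      | zero => norm_num
      | succ n ih => rw [e3 n, ih]
    have a := e1 0
    have b := e4 m
    simp only [Nat.zero_add, Nat.mul_zero] at a b
    rcases hb 0 with ⟨h0, h1⟩ | ⟨h0, h1⟩ <;> simp only [Nat.mul_zero] at h0 <;> omega

lemma hitAt_formula (r : ℕ → ℕ) (h2 : TwoState r) (habba : BalancedBlocks r 2) (b : Bool)
    (t : ℕ) :
    hitAt b b r t = if r (t/2) = (if b then 2 else 1) then some (r t + 3) else none := by
  have hc1 : ∀ j, countIn r (2*j) 1 = j := fun j => by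
    rw [countIn_eq_count]; exact (count_states r h2 habba j).1
  have hc2 : ∀ j, countIn r (2*j) 2 = j := fun j => by
    rw [countIn_eq_count]; exact (count_states r h2 habba j).2
  rcases Nat.even_or_odd t with he | ho
  · obtain ⟨j, hj⟩ := he
    have ht : t = 2*j := by omega
    subst ht
    have hdiv : 2*j/2 = j := by omega
    rw [hitAt, hc1, hc2, hdiv]
    rcases h2.1 (2*j) with ht | ht <;> rcases h2.1 j with hj' | hj' <;>
      cases b <;> simp [ht, hj']
  · obtain ⟨j, hj⟩ := ho
    subst hj
    have hdiv : (2*j+1)/2 = j := by omega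
    rw [hitAt, hdiv]
    have hc1' : countIn r (2*j+1) 1 = Nat.count (fun k => r k = 1) (2*j)
        + if r (2*j) = 1 then 1 else 0 := by
      rw [countIn_eq_count, Nat.count_succ]
    have hc2' : countIn r (2*j+1) 2 = Nat.count (fun k => r k = 2) (2*j)
        + if r (2*j) = 2 then 1 else 0 := by
      rw [countIn_eq_count, Nat.count_succ]
    rw [hc1', hc2', (count_states r h2 habba j).1, (count_states r h2 habba j).2]
    rcases blocks_of r h2 habba j with ⟨h0, h1⟩ | ⟨h0, h1⟩ <;>
      rcases h2.1 j with hj' | hj' <;> cases b <;> simp [h0, h1, hj']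

lemma periodic_infinite (r : ℕ → ℕ) (p : ℕ) (hper : IsPeriodicWith r p) (hp : 0 < p)
    (c k : ℕ) (hk : r k = c) : {j | r j = c}.Infinite := by
  have hmem : ∀ n, r (k + n * p) = c := by
    intro n
    induction n with
    | zero => simpa using hk
    | succ m ih => have := hper (k + m * p); rw [show k+(m+1)*p = k+m*p+p by ring, this]; exact ih
  exact Set.infinite_of_injective_forall_mem
    (f := fun n : ℕ => k + n * p)
    (fun a b hab => by
      have h : k + a * p = k + b * p := hab
      have : a * p = b * p := by omega
      exact Nat.eq_of_mul_eq_mul_right hp this)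
    (fun n => hmem n)

lemma half_pred_infinite (Q : ℕ → Prop) (hQ : {j | Q j}.Infinite) :
    {t | Q (t/2)}.Infinite := by
  have hmono := Nat.nth_strictMono hQ
  exact Set.infinite_of_injective_forall_mem
    (f := fun n : ℕ => 2 * Nat.nth Q n)
    (fun a b hab => hmono.injective (Nat.eq_of_mul_eq_mul_left (by norm_num) hab))
    (fun n => by
      simp only [Set.mem_setOf_eq, Nat.mul_div_cancel_left _ (by norm_num : 0 < 2)]
      exact Nat.nth_mem_of_infinite hQ n)

lemma count_half (Q : ℕ → Prop) [DecidablePred Q] :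
    ∀ n, Nat.count (fun t => Q (t/2)) (2*n) = 2 * Nat.count Q n := by
  intro n
  induction n with
  | zero => simp
  | succ m ih =>
    have e : 2*(m+1) = 2*m + 1 + 1 := by ring
    rw [e]
    simp only [Nat.count_succ]
    have d1 : (2*m)/2 = m := by omega
    have d2 : (2*m+1)/2 = m := by omega
    rw [d1, d2, ih]
    by_cases h : Q m <;> simp [h] <;> ring

lemma nth_half (Q : ℕ → Prop) [DecidablePred Q] (hQ : {j | Q j}.Infinite) (m : ℕ) :
    Nat.nth (fun t => Q (t/2)) (2*m) = 2 * Nat.nth Q m ∧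
    Nat.nth (fun t => Q (t/2)) (2*m+1) = 2 * Nat.nth Q m + 1 := by
  set n := Nat.nth Q m with hn
  have hQn : Q n := Nat.nth_mem_of_infinite hQ m
  have hcn : Nat.count Q n = m := Nat.count_nth_of_infinite hQ m
  have hc2 : Nat.count (fun t => Q (t/2)) (2*n) = 2*m := by rw [count_half, hcn]
  have hd1 : (2*n)/2 = n := by omega
  have hd2 : (2*n+1)/2 = n := by omega
  constructor
  · have hP : Q ((2*n)/2) := by rw [hd1]; exact hQn
    have := Nat.nth_count (p := fun t => Q (t/2)) hP
    rwa [hc2] at this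
  · have hP : Q ((2*n+1)/2) := by rw [hd2]; exact hQn
    have := Nat.nth_count (p := fun t => Q (t/2)) hP
    rw [Nat.count_succ, hc2, hd1, if_pos hQn] at this
    exact this

lemma compOp_formula (r : ℕ → ℕ) (h2 : TwoState r) (habba : BalancedBlocks r 2)
    (b : Bool) (c : ℕ) (hc : c = if b then 2 else 1)
    (hinfQ : {j | r j = c}.Infinite) (k : ℕ) :
    compOp b b r k = r (Nat.nth (fun t => r (t/2) = c) k) := by
  have hPeq : (fun t => (hitAt b b r t).isSome = true) = (fun t => r (t/2) = c) := by
    funext t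
    rw [hitAt_formula r h2 habba b t, ← hc]
    by_cases h : r (t/2) = c <;> simp [h]
  rw [compOp, compSeq, hPeq]
  have hinfP := half_pred_infinite _ hinfQ
  have hn : r (Nat.nth (fun t => r (t/2) = c) k / 2) = c :=
    Nat.nth_mem_of_infinite hinfP k
  rw [hitAt_formula r h2 habba b, ← hc, if_pos hn]
  simp

lemma card_nth_filter (Q R : ℕ → Prop) [DecidablePred Q] [DecidablePred R]
    (hQ : {j | Q j}.Infinite) (p q : ℕ) (hcount : Nat.count Q p = q) :
    ((Finset.range q).filter (fun i => R (Nat.nth Q i))).card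
      = ((Finset.range p).filter (fun j => Q j ∧ R j)).card := by
  apply Finset.card_bij (fun i _ => Nat.nth Q i)
  · intro a ha
    simp only [Finset.mem_filter, Finset.mem_range] at ha ⊢
    exact ⟨Nat.nth_lt_of_lt_count (by rw [hcount]; exact ha.1),
      Nat.nth_mem_of_infinite hQ a, ha.2⟩
  · intro a _ b _ hab
    exact (Nat.nth_strictMono hQ).injective hab
  · intro j hj
    simp only [Finset.mem_filter, Finset.mem_range] at hj
    refine ⟨Nat.count Q j, ?_, (Nat.nth_count hj.2.1)⟩
    simp only [Finset.mem_filter, Finset.mem_range]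
    constructor
    · rw [← hcount]; exact Nat.count_strict_mono hj.2.1 hj.1
    · rw [Nat.nth_count hj.2.1]; exact hj.2.2

lemma count_split (r : ℕ → ℕ) (h2 : TwoState r) (R : ℕ → Prop) [DecidablePred R] :
    ∀ n, Nat.count (fun j => r j = 1 ∧ R j) n + Nat.count (fun j => r j = 2 ∧ R j) n
      = Nat.count R n := by
  intro n
  induction n with
  | zero => simp
  | succ m ih =>
    simp only [Nat.count_succ]
    rcases h2.1 m with h | h <;> by_cases hR : R m <;> simp [h, hR] <;> omega

lemma count_periodic_double (R : ℕ → Prop) [DecidablePred R] (q : ℕ)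
    (hper : ∀ j, R (j + q) ↔ R j) :
    Nat.count R (2*q) = 2 * Nat.count R q := by
  have key : ∀ n, Nat.count R (n + q) = Nat.count R n + Nat.count R q := by
    intro n
    induction n with
    | zero => simp
    | succ m ih =>
      have e : m + 1 + q = (m + q) + 1 := by omega
      rw [e, Nat.count_succ, Nat.count_succ, ih]
      by_cases h : R m
      · rw [if_pos h, if_pos ((hper m).2 h)]; omega
      · rw [if_neg h, if_neg (fun hh => h ((hper m).1 hh))]; omega
  have e2 : 2*q = q + q := by ring
  rw [e2, key q]
  omega

end Stmt17Aux

/-- If `r` is an ab-ba rotor of period `p`, then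
`m(UU(r)) + m(DD(r)) = 2·m(r)`, the ba-frequencies of `UU(r)` and `DD(r)` being computed
with respect to period length `p` (targets `4, 5` identified with `1, 2`). -/
theorem statement17 (r : ℕ → ℕ) (p : ℕ) (h2 : TwoState r) (hmin : IsMinimalPeriod r p)
    (habba : BalancedBlocks r 2) :
    baFreq (UUop r) p + baFreq (DDop r) p = 2 * baFreq r p := by
  obtain ⟨hp0, hper, -⟩ := hmin
  obtain ⟨q, hpq, hq0⟩ := p_even r p h2 hper hp0 habba
  -- infinitude of the two state sets
  obtain ⟨k1, hk1⟩ := h2.2.1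
  obtain ⟨k2, hk2⟩ := h2.2.2
  have hinf1 : {j | r j = 1}.Infinite := periodic_infinite r p hper hp0 1 k1 hk1
  have hinf2 : {j | r j = 2}.Infinite := periodic_infinite r p hper hp0 2 k2 hk2
  -- the compressor outputs at even positions
  have hUU : ∀ j, UUop r (2 * j) = r (2 * Nat.nth (fun i => r i = 2) j) := by
    intro j
    rw [UUop, compOp_formula r h2 habba true 2 rfl hinf2 (2*j),
      (nth_half (fun i => r i = 2) hinf2 j).1]
  have hDD : ∀ j, DDop r (2 * j) = r (2 * Nat.nth (fun i => r i = 1) j) := by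
    intro j
    rw [DDop, compOp_formula r h2 habba false 1 rfl hinf1 (2*j),
      (nth_half (fun i => r i = 1) hinf1 j).1]
  -- counts of each state per period
  have hcQ1 : Nat.count (fun i => r i = 1) p = q := by
    rw [hpq]; exact (count_states r h2 habba q).1
  have hcQ2 : Nat.count (fun i => r i = 2) p = q := by
    rw [hpq]; exact (count_states r h2 habba q).2
  have hdiv : p / 2 = q := by omega
  -- the three filter cards as Nat.counts
  have cardUU : ((Finset.range (p/2)).filter (fun j => UUop r (2 * j) = 2)).card
      = Nat.count (fun j => r j = 2 ∧ r (2*j) = 2) p := by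
    rw [hdiv]
    have h1 : (Finset.range q).filter (fun j => UUop r (2 * j) = 2)
        = (Finset.range q).filter (fun j => r (2 * Nat.nth (fun i => r i = 2) j) = 2) := by
      apply Finset.filter_congr
      intro j _
      rw [hUU j]
    rw [h1, card_nth_filter (fun i => r i = 2) (fun j => r (2*j) = 2) hinf2 p q hcQ2,
      Nat.count_eq_card_filter_range]
  have cardDD : ((Finset.range (p/2)).filter (fun j => DDop r (2 * j) = 2)).card
      = Nat.count (fun j => r j = 1 ∧ r (2*j) = 2) p := by
    rw [hdiv]
    have h1 : (Finset.range q).filter (fun j => DDop r (2 * j) = 2)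
        = (Finset.range q).filter (fun j => r (2 * Nat.nth (fun i => r i = 1) j) = 2) := by
      apply Finset.filter_congr
      intro j _
      rw [hDD j]
    rw [h1, card_nth_filter (fun i => r i = 1) (fun j => r (2*j) = 2) hinf1 p q hcQ1,
      Nat.count_eq_card_filter_range]
  have cardR : ((Finset.range (p/2)).filter (fun j => r (2 * j) = 2)).card
      = Nat.count (fun j => r (2*j) = 2) q := by
    rw [hdiv, Nat.count_eq_card_filter_range]
  -- the key count identity
  have hsplit := count_split r h2 (fun j => r (2*j) = 2) p
  have hdouble : Nat.count (fun j => r (2*j) = 2) p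
      = 2 * Nat.count (fun j => r (2*j) = 2) q := by
    rw [hpq]
    apply count_periodic_double
    intro j
    have e : 2*(j+q) = 2*j + p := by omega
    rw [e, hper (2*j)]
  -- final arithmetic
  set N2 := Nat.count (fun j => r j = 2 ∧ r (2*j) = 2) p with hN2
  set N1 := Nat.count (fun j => r j = 1 ∧ r (2*j) = 2) p with hN1
  set K := Nat.count (fun j => r (2*j) = 2) q with hK
  have hkey : N1 + N2 = 2 * K := by rw [hsplit, hdouble]
  rw [baFreq, baFreq, baFreq, cardUU, cardDD, cardR]
  have hpne : (p : ℚ) ≠ 0 := by positivity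
  field_simp
  have : (N1 : ℚ) + N2 = 2 * K := by exact_mod_cast hkey
  ring_nf
  linarith
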